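/- arXiv:2402.04167 — 4 statements merged into one kernel-verified Lean document; each statement's English description precedes it below -/
import Mathlib

section
/- Let n ≥ 3 and φ(x₁,x₂) = x₁x₂² - x₁ⁿ with n odd. Then for any (c₁,c₂) ≠ (0,0), every critical point a = (a₁,a₂) of Φ(x) = φ(x) - c₁x₁ - c₂x₂ is non-degenerate, i.e. det Hess Φ(a) ≠ 0. -/
/-!
The Hessian determinant of `Φ` at `a` is `-(2n(n-1) a₁ⁿ⁻¹ + 4 a₂²)`. For odd `n` the exponent
`n - 1` is even, so the bracket vanishes only at `a = 0`, and `0` is not a critical point because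
`∇Φ(0) = -(c₁, c₂) ≠ 0`.
-/

open Real

noncomputable def pd1 (f : ℝ × ℝ → ℝ) (a : ℝ × ℝ) : ℝ := fderiv ℝ f a (1, 0)
noncomputable def pd2 (f : ℝ × ℝ → ℝ) (a : ℝ × ℝ) : ℝ := fderiv ℝ f a (0, 1)

/-- Determinant of the Hessian matrix of second partial derivatives. -/
noncomputable def hessDet (f : ℝ × ℝ → ℝ) (a : ℝ × ℝ) : ℝ :=
  pd1 (pd1 f) a * pd2 (pd2 f) a - pd1 (pd2 f) a * pd2 (pd1 f) a

lemma pd1_eq_of_hasDerivAt {f : ℝ × ℝ → ℝ} {a : ℝ × ℝ} {d : ℝ} (hf : DifferentiableAt ℝ f a)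
    (hd : HasDerivAt (fun t => f (t, a.2)) d a.1) : pd1 f a = d :=
  (hf.hasFDerivAt.comp_hasDerivAt a.1
    ((hasDerivAt_id a.1).prodMk (hasDerivAt_const a.1 a.2))).unique hd

lemma pd2_eq_of_hasDerivAt {f : ℝ × ℝ → ℝ} {a : ℝ × ℝ} {d : ℝ} (hf : DifferentiableAt ℝ f a)
    (hd : HasDerivAt (fun t => f (a.1, t)) d a.2) : pd2 f a = d :=
  (hf.hasFDerivAt.comp_hasDerivAt a.2
    ((hasDerivAt_const a.2 a.1).prodMk (hasDerivAt_id a.2))).unique hd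

lemma add_pow_add_sq_pos {k : ℕ} {C D x y : ℝ} (hk : Even k) (hk0 : k ≠ 0) (hC : 0 < C)
    (hD : 0 < D) (hxy : (x, y) ≠ 0) : 0 < C * x ^ k + D * y ^ 2 := by
  rcases eq_or_ne x 0 with rfl | hx
  · have hy : y ≠ 0 := fun hy => hxy (by simp [hy])
    simp only [zero_pow hk0, mul_zero, zero_add]
    positivity
  · exact add_pos_of_pos_of_nonneg (mul_pos hC (hk.pow_pos hx)) (by positivity)

def phi (n : ℕ) (c₁ c₂ : ℝ) (x : ℝ × ℝ) : ℝ := x.1 * x.2 ^ 2 - x.1 ^ n - c₁ * x.1 - c₂ * x.2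

namespace phi

variable {n : ℕ} {c₁ c₂ : ℝ}

lemma pd1_eq : pd1 (phi n c₁ c₂) = fun x => x.2 ^ 2 - n * x.1 ^ (n - 1) - c₁ := by
  funext x
  refine pd1_eq_of_hasDerivAt (by unfold phi; fun_prop) ?_
  exact ((((hasDerivAt_id x.1).mul_const (x.2 ^ 2)).sub (hasDerivAt_pow n x.1)).sub
    ((hasDerivAt_id x.1).const_mul c₁)).sub_const (c₂ * x.2) |>.congr_deriv (by simp)

lemma pd2_eq : pd2 (phi n c₁ c₂) = fun x => 2 * x.1 * x.2 - c₂ := by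
  funext x
  refine pd2_eq_of_hasDerivAt (by unfold phi; fun_prop) ?_
  exact (((hasDerivAt_pow 2 x.2).const_mul x.1).sub_const (x.1 ^ n)).sub_const (c₁ * x.1)
    |>.sub ((hasDerivAt_id x.2).const_mul c₂) |>.congr_deriv (by simp; ring)

lemma hessDet_eq (hn : 2 ≤ n) (a : ℝ × ℝ) :
    hessDet (phi n c₁ c₂) a = -(2 * n * (n - 1) * a.1 ^ (n - 1) + 4 * a.2 ^ 2) := by
  have h11 : pd1 (pd1 (phi n c₁ c₂)) a = -(n * (n - 1) * a.1 ^ (n - 2)) := by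
    rw [pd1_eq]
    refine pd1_eq_of_hasDerivAt (by fun_prop) ?_
    exact (((hasDerivAt_pow (n - 1) a.1).const_mul (n : ℝ)).const_sub (a.2 ^ 2)).sub_const c₁
      |>.congr_deriv (by rw [Nat.cast_sub (by omega : 1 ≤ n), Nat.sub_sub]; ring)
  have h12 : pd1 (pd2 (phi n c₁ c₂)) a = 2 * a.2 := by
    rw [pd2_eq]
    refine pd1_eq_of_hasDerivAt (by fun_prop) ?_
    exact (((hasDerivAt_id a.1).const_mul 2).mul_const a.2).sub_const c₂
      |>.congr_deriv (by simp)
  have h21 : pd2 (pd1 (phi n c₁ c₂)) a = 2 * a.2 := by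
    rw [pd1_eq]
    refine pd2_eq_of_hasDerivAt (by fun_prop) ?_
    exact ((hasDerivAt_pow 2 a.2).sub_const (n * a.1 ^ (n - 1))).sub_const c₁
      |>.congr_deriv (by simp)
  have h22 : pd2 (pd2 (phi n c₁ c₂)) a = 2 * a.1 := by
    rw [pd2_eq]
    refine pd2_eq_of_hasDerivAt (by fun_prop) ?_
    exact ((hasDerivAt_id a.2).const_mul (2 * a.1)).sub_const c₂ |>.congr_deriv (by simp)
  rw [hessDet, h11, h12, h21, h22]
  obtain ⟨m, rfl⟩ : ∃ m, n = m + 2 := ⟨n - 2, by omega⟩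
  simp only [Nat.add_sub_cancel, show m + 2 - 1 = m + 1 by omega]
  ring

lemma ne_zero_of_critical (hn : 2 ≤ n) (hc : (c₁, c₂) ≠ (0, 0)) {a : ℝ × ℝ}
    (h₁ : pd1 (phi n c₁ c₂) a = 0) (h₂ : pd2 (phi n c₁ c₂) a = 0) : a ≠ 0 := by
  rintro rfl
  rw [pd1_eq] at h₁
  rw [pd2_eq] at h₂
  simp only [Prod.fst_zero, Prod.snd_zero, zero_pow (by omega : n - 1 ≠ 0)] at h₁ h₂
  exact hc (Prod.ext (by linarith) (by linarith))

end phi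

theorem stmt0 (n : ℕ) (hn : 3 ≤ n) (hodd : Odd n) (c₁ c₂ : ℝ)
    (hc : (c₁, c₂) ≠ (0, 0))
    (Φ : ℝ × ℝ → ℝ)
    (hΦ : Φ = fun x => x.1 * x.2 ^ 2 - x.1 ^ n - c₁ * x.1 - c₂ * x.2)
    (a : ℝ × ℝ) (ha : pd1 Φ a = 0 ∧ pd2 Φ a = 0) :
    hessDet Φ a ≠ 0 := by
  obtain rfl : Φ = phi n c₁ c₂ := hΦ
  have hn2 : 2 ≤ n := by omega
  have ha0 : (a.1, a.2) ≠ 0 := phi.ne_zero_of_critical hn2 hc ha.1 ha.2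
  have hcoef : (0 : ℝ) < 2 * n * (n - 1) := by
    have : (2 : ℝ) ≤ n := by exact_mod_cast hn2
    nlinarith
  rw [phi.hessDet_eq hn2, neg_ne_zero]
  exact (add_pow_add_sq_pos (Nat.Odd.sub_odd hodd odd_one) (by omega) hcoef
    (by norm_num) ha0).ne'
end

section
/- Let n ≥ 3 and Φ(x) = x₁x₂² + x₁ⁿ - c₁x₁ - c₂x₂. Suppose a = (a₁,a₂) is a degenerate critical point (so a₁ ≠ 0, a₂ ≠ 0, and det Hess Φ(a) = 0, i.e. 4a₂² = 2n(n-1)a₁^{n-1}). Then the cubic form Φ₃ of the Taylor expansion of Φ at a, restricted to the kernel direction x₂ = -(a₂/a₁)x₁ of the Hessian, equals x₁³ · a₁^{n-3} · (n(n-1)/2) · (1 + (n-2)/3), which is nonzero. -/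
/-- The cubic form of the Taylor expansion of `f` at `a`, evaluated on the vector `v`:
`(1/6)·(d³/dt³)|₀ f(a + t v)`. -/
noncomputable def cubicForm (f : ℝ × ℝ → ℝ) (a v : ℝ × ℝ) : ℝ :=
  (deriv^[3] (fun t : ℝ => f (a.1 + t * v.1, a.2 + t * v.2)) 0) / 6

/-!
Along the line `t ↦ a + t v` the cubic Taylor coefficient of `x₁x₂² + x₁ⁿ - c₁x₁ - c₂x₂` is
`v₁v₂² + C(n,3) a₁ⁿ⁻³ v₁³`, the linear terms contributing nothing. On the kernel direction
`v = (x₁, -(a₂/a₁)x₁)` the first term is `(a₂/a₁)² x₁³`, and degeneracy of the Hessian,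
`a₂² = n(n-1)/2 · a₁ⁿ⁻¹`, turns it into `n(n-1)/2 · a₁ⁿ⁻³ x₁³`; adding
`C(n,3) = n(n-1)/2 · (n-2)/3` gives the claimed value, nonzero since `a₁ ≠ 0` and `n ≥ 3`.
-/

section
variable {𝕜 : Type*} [NontriviallyNormedField 𝕜]

theorem iteratedDeriv_affine_pow (A v : 𝕜) (k j : ℕ) (t : 𝕜) :
    iteratedDeriv j (fun t => (A + t * v) ^ k) t =
      k.descFactorial j * v ^ j * (A + t * v) ^ (k - j) := by
  have h := congrFun (iteratedDeriv_comp_const_mul (n := j) (f := fun s => (A + s) ^ k)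
    (by fun_prop) v) t
  simp only [iteratedDeriv_comp_const_add (f := fun s : 𝕜 => s ^ k), iteratedDeriv_pow] at h
  rw [show (fun t => (A + t * v) ^ k) = fun t => (A + v * t) ^ k by ext; ring, h]
  ring

theorem iteratedDeriv_affine_of_two_le (A v : 𝕜) {j : ℕ} (hj : 2 ≤ j) (t : 𝕜) :
    iteratedDeriv j (fun t => A + t * v) t = 0 := by
  simpa [Nat.descFactorial_of_lt (by omega : 1 < j)] using iteratedDeriv_affine_pow A v 1 j t

end

theorem cubicForm_fst_mul_snd_sq_add_fst_pow (n : ℕ) (c₁ c₂ : ℝ) (a v : ℝ × ℝ) :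
    cubicForm (fun x => x.1 * x.2 ^ 2 + x.1 ^ n - c₁ * x.1 - c₂ * x.2) a v =
      v.1 * v.2 ^ 2 + n.choose 3 * a.1 ^ (n - 3) * v.1 ^ 3 := by
  rw [cubicForm, ← iteratedDeriv_eq_iterate, iteratedDeriv_fun_sub (by fun_prop) (by fun_prop),
    iteratedDeriv_fun_sub (by fun_prop) (by fun_prop),
    iteratedDeriv_fun_add (by fun_prop) (by fun_prop),
    iteratedDeriv_fun_mul (by fun_prop) (by fun_prop),
    iteratedDeriv_const_mul_field, iteratedDeriv_const_mul_field]
  -- of the four Leibniz terms for `x₁ x₂²` only `3 · (d/dt) x₁ · (d²/dt²) x₂²` survives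
  simp only [Finset.sum_range_succ, Finset.sum_range_zero, iteratedDeriv_affine_pow,
    iteratedDeriv_affine_of_two_le _ _ le_rfl,
    iteratedDeriv_affine_of_two_le _ _ (by norm_num : 2 ≤ 3),
    Nat.descFactorial_eq_factorial_mul_choose n 3]
  norm_num [Nat.descFactorial, Nat.factorial]
  ring

theorem cast_choose_three_mul_six (m : ℕ) :
    ((m + 3).choose 3 : ℝ) * 6 = (m + 3) * (m + 2) * (m + 1) := by
  have h := Nat.descFactorial_eq_factorial_mul_choose (m + 3) 3
  simp only [Nat.descFactorial, Nat.factorial] at h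
  have h' := congrArg (Nat.cast : ℕ → ℝ) h
  push_cast at h'
  linarith

theorem stmt3_general (n : ℕ) (hn : 3 ≤ n) (c₁ c₂ : ℝ)
    (Φ : ℝ × ℝ → ℝ)
    (hΦ : Φ = fun x => x.1 * x.2 ^ 2 + x.1 ^ n - c₁ * x.1 - c₂ * x.2)
    (a : ℝ × ℝ) (ha1 : a.1 ≠ 0)
    (hdeg : 4 * a.2 ^ 2 = 2 * (n : ℝ) * ((n : ℝ) - 1) * a.1 ^ (n - 1)) :
    (∀ x₁ : ℝ, cubicForm Φ a (x₁, -(a.2 / a.1) * x₁) =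
        x₁ ^ 3 * a.1 ^ (n - 3) * ((n : ℝ) * ((n : ℝ) - 1) / 2) * (1 + ((n : ℝ) - 2) / 3)) ∧
    a.1 ^ (n - 3) * ((n : ℝ) * ((n : ℝ) - 1) / 2) * (1 + ((n : ℝ) - 2) / 3) ≠ 0 := by
  obtain ⟨m, rfl⟩ : ∃ m, n = m + 3 := ⟨n - 3, by omega⟩
  rw [show m + 3 - 1 = m + 2 by omega] at hdeg
  simp only [Nat.add_sub_cancel, Nat.cast_add, Nat.cast_ofNat] at hdeg ⊢
  refine ⟨fun x₁ => ?_, ?_⟩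
  · rw [hΦ, cubicForm_fst_mul_snd_sq_add_fst_pow, Nat.add_sub_cancel]
    field_simp
    linear_combination
      (3 * x₁ ^ 3 / 2) * hdeg + x₁ ^ 3 * a.1 ^ (m + 2) * cast_choose_three_mul_six m
  · have hm : (0 : ℝ) ≤ m := m.cast_nonneg
    refine mul_ne_zero (mul_ne_zero (pow_ne_zero m ha1) ?_) ?_ <;> nlinarith

theorem stmt3 (n : ℕ) (hn : 3 ≤ n) (c₁ c₂ : ℝ)
    (Φ : ℝ × ℝ → ℝ)
    (hΦ : Φ = fun x => x.1 * x.2 ^ 2 + x.1 ^ n - c₁ * x.1 - c₂ * x.2)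
    (a : ℝ × ℝ) (ha1 : a.1 ≠ 0) (ha2 : a.2 ≠ 0)
    (hcrit : pd1 Φ a = 0 ∧ pd2 Φ a = 0)
    (hdeg : 4 * a.2 ^ 2 = 2 * (n : ℝ) * ((n : ℝ) - 1) * a.1 ^ (n - 1)) :
    (∀ x₁ : ℝ, cubicForm Φ a (x₁, -(a.2 / a.1) * x₁) =
        x₁ ^ 3 * a.1 ^ (n - 3) * ((n : ℝ) * ((n : ℝ) - 1) / 2) * (1 + ((n : ℝ) - 2) / 3)) ∧
    a.1 ^ (n - 3) * ((n : ℝ) * ((n : ℝ) - 1) / 2) * (1 + ((n : ℝ) - 2) / 3) ≠ 0 :=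
  stmt3_general n hn c₁ c₂ Φ hΦ a ha1 hdeg
end

section
/- Let m ≥ 2 and consider φ₄(z₁,z₂) = b·z₁z₂² - ω·z₁^m - ε·z₂ with b ≠ 0, ω ≠ 0, ε ∈ {1,-1}. Then every critical point z⁰ = (z₁⁰, z₂⁰) of φ₄ satisfies z₁⁰ ≠ 0, z₂⁰ ≠ 0, and det Hess φ₄(z⁰) ≠ 0; hence φ₄ has only non-degenerate critical points. -/
section aux

variable (b ω ε : ℝ) (m : ℕ)

private lemma hasF (a : ℝ × ℝ) :
    HasFDerivAt (fun z : ℝ×ℝ => b * z.1 * z.2 ^ 2 - ω * z.1 ^ m - ε * z.2)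
      ((((b * a.1) • ((((2:ℕ):ℝ) * a.2 ^ (2-1)) • ContinuousLinearMap.snd ℝ ℝ ℝ)
          + (a.2 ^ 2) • (b • ContinuousLinearMap.fst ℝ ℝ ℝ))
        - ω • ((((m:ℕ):ℝ) * a.1 ^ (m-1)) • ContinuousLinearMap.fst ℝ ℝ ℝ))
        - ε • ContinuousLinearMap.snd ℝ ℝ ℝ) a := by
  have hp : HasFDerivAt (fun z : ℝ×ℝ => z.1 ^ m)
      ((((m:ℕ):ℝ) * a.1 ^ (m-1)) • ContinuousLinearMap.fst ℝ ℝ ℝ) a :=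
    (hasDerivAt_pow m a.1).comp_hasFDerivAt a hasFDerivAt_fst
  have hq : HasFDerivAt (fun z : ℝ×ℝ => z.2 ^ 2)
      ((((2:ℕ):ℝ) * a.2 ^ (2-1)) • ContinuousLinearMap.snd ℝ ℝ ℝ) a :=
    (hasDerivAt_pow 2 a.2).comp_hasFDerivAt a hasFDerivAt_snd
  exact (((hasFDerivAt_fst.const_mul b).mul hq).sub
      (hp.const_mul ω)).sub (hasFDerivAt_snd.const_mul ε)

private lemma pd1_phi :
    pd1 (fun z : ℝ×ℝ => b * z.1 * z.2 ^ 2 - ω * z.1 ^ m - ε * z.2)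
      = fun a => b * a.2 ^ 2 - ω * ((m:ℝ) * a.1 ^ (m-1)) := by
  funext a
  rw [pd1, (hasF b ω ε m a).fderiv]
  simp
  ring

private lemma pd2_phi :
    pd2 (fun z : ℝ×ℝ => b * z.1 * z.2 ^ 2 - ω * z.1 ^ m - ε * z.2)
      = fun a => 2 * b * a.1 * a.2 - ε := by
  funext a
  rw [pd2, (hasF b ω ε m a).fderiv]
  simp
  ring

private lemma hasF1 (a : ℝ × ℝ) :
    HasFDerivAt (fun z : ℝ×ℝ => b * z.2 ^ 2 - ω * ((m:ℝ) * z.1 ^ (m-1)))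
      ((b • ((((2:ℕ):ℝ) * a.2 ^ (2-1)) • ContinuousLinearMap.snd ℝ ℝ ℝ))
        - ω • ((m:ℝ) • ((((m-1:ℕ):ℝ) * a.1 ^ (m-1-1)) • ContinuousLinearMap.fst ℝ ℝ ℝ))) a := by
  have hp : HasFDerivAt (fun z : ℝ×ℝ => z.1 ^ (m-1))
      ((((m-1:ℕ):ℝ) * a.1 ^ (m-1-1)) • ContinuousLinearMap.fst ℝ ℝ ℝ) a :=
    (hasDerivAt_pow (m-1) a.1).comp_hasFDerivAt a hasFDerivAt_fst
  have hq : HasFDerivAt (fun z : ℝ×ℝ => z.2 ^ 2)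
      ((((2:ℕ):ℝ) * a.2 ^ (2-1)) • ContinuousLinearMap.snd ℝ ℝ ℝ) a :=
    (hasDerivAt_pow 2 a.2).comp_hasFDerivAt a hasFDerivAt_snd
  exact (hq.const_mul b).sub ((hp.const_mul (m:ℝ)).const_mul ω)

private lemma hasF2 (a : ℝ × ℝ) :
    HasFDerivAt (fun z : ℝ×ℝ => 2 * b * z.1 * z.2 - ε)
      (((2 * b * a.1) • ContinuousLinearMap.snd ℝ ℝ ℝ
        + a.2 • ((2 * b) • ContinuousLinearMap.fst ℝ ℝ ℝ))) a := by
  exact ((hasFDerivAt_fst.const_mul (2 * b)).mul hasFDerivAt_snd).sub_const ε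

end aux

theorem stmt10 (m : ℕ) (hm : 2 ≤ m) (b ω ε : ℝ) (hb : b ≠ 0) (hω : ω ≠ 0)
    (hε : ε = 1 ∨ ε = -1)
    (φ₄ : ℝ × ℝ → ℝ)
    (hφ : φ₄ = fun z => b * z.1 * z.2 ^ 2 - ω * z.1 ^ m - ε * z.2)
    (z : ℝ × ℝ) (hz : pd1 φ₄ z = 0 ∧ pd2 φ₄ z = 0) :
    z.1 ≠ 0 ∧ z.2 ≠ 0 ∧ hessDet φ₄ z ≠ 0 := by
  obtain ⟨h1, h2⟩ := hz
  rw [hφ, pd1_phi] at h1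
  rw [hφ, pd2_phi b ω ε m] at h2
  simp only at h1 h2
  have hεne : ε ≠ 0 := by rcases hε with h | h <;> simp [h]
  have hz1 : z.1 ≠ 0 := by
    intro h; apply hεne; rw [h] at h2; linarith
  have hz2 : z.2 ≠ 0 := by
    intro h; apply hεne; rw [h] at h2; linarith
  refine ⟨hz1, hz2, ?_⟩
  -- compute second partial derivatives
  have e11 : pd1 (pd1 φ₄) z = - (ω * ((m:ℝ) * (((m-1:ℕ):ℝ) * z.1 ^ (m-1-1)))) := by
    rw [hφ, pd1_phi, pd1, (hasF1 b ω m z).fderiv]; simp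
  have e12 : pd2 (pd1 φ₄) z = b * (2 * z.2) := by
    rw [hφ, pd1_phi, pd2, (hasF1 b ω m z).fderiv]; simp
  have e21 : pd1 (pd2 φ₄) z = 2 * b * z.2 := by
    rw [hφ, pd2_phi b ω ε m, pd1, (hasF2 b ε z).fderiv]; simp; ring
  have e22 : pd2 (pd2 φ₄) z = 2 * b * z.1 := by
    rw [hφ, pd2_phi b ω ε m, pd2, (hasF2 b ε z).fderiv]; simp
  have hm1 : m - 1 - 1 = m - 2 := by omega
  have hpow : z.1 ^ (m-1) = z.1 ^ (m-2) * z.1 := by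
    rw [← pow_succ]; congr 1; omega
  rw [hpow] at h1
  have hdet : hessDet φ₄ z
      = -(2 * b * ω * (m:ℝ) * (((m-1:ℕ):ℝ) + 2)) * (z.1 ^ (m-2) * z.1) := by
    rw [hessDet, e11, e12, e21, e22, hm1]
    linear_combination (-4*b) * h1
  rw [hdet]
  apply mul_ne_zero
  · have hm0 : (0:ℝ) < (m:ℝ) := by positivity
    have hm2 : (0:ℝ) < ((m-1:ℕ):ℝ) + 2 := by positivity
    intro h
    apply hb
    have := mul_ne_zero (mul_ne_zero (mul_ne_zero hb hω) (ne_of_gt hm0)) (ne_of_gt hm2)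
    simp only [neg_eq_zero] at h
    exact absurd h (by
      intro hh
      exact this (by linarith [hh] ))
  · exact mul_ne_zero (pow_ne_zero _ hz1) hz1
end

section
/- Let m ≥ 2, γ with 3/4 < γ ≤ 1, and σ₁⁰ ∈ ℝ. The function s = (s₁, s₂) ↦ |s₁/s₂^{2m/(m+1)} - σ₁⁰|^{-(4γ/3 - 1)} · |s₂|^{-((2m+1)γ/(m+1) - 1)}, defined for s₂ > 0, is not in L^p on any neighborhood of {(σ₁⁰·t^{2m/(m+1)}, t) : t > 0 small} intersected with a neighborhood of the origin, for p = 3/(4γ - 3). -/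
/-!
Along the curve `s₁ = σ₀ s₂^a` with `a = 2m/(m+1)` the first factor blows up like
`|s₁ - σ₀ s₂^a|^(-b)` with `b = 4γ/3 - 1`, while the second factor stays bounded below for `s₂`
near a fixed `t₀ > 0`. For `p = 3/(4γ-3)` one has `b p = 1`, so on every horizontal segment
starting at the curve the `p`-th power behaves like `1/(s₁ - σ₀ s₂^a)` and is not integrable;
integrating over a set of heights of positive measure (Tonelli) gives `∫ |f|^p = ∞`.
-/

open Real MeasureTheory Set
open scoped ENNReal

lemma lintegral_Ioo_rpow_eq_top {r h : ℝ} (hr : r ≤ -1) (hh : 0 < h) :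
    ∫⁻ x in Ioo 0 h, ENNReal.ofReal (x ^ r) = ∞ := by
  by_contra hfin
  have hint : IntegrableOn (fun x : ℝ => x ^ r) (Ioo 0 h) := by
    refine (lintegral_ofReal_ne_top_iff_integrable (by fun_prop) ?_).mp hfin
    filter_upwards [ae_restrict_mem measurableSet_Ioo] with x hx
    exact rpow_nonneg hx.1.le r
  linarith [(intervalIntegral.integrableOn_Ioo_rpow_iff hh).mp hint]

lemma lintegral_Ioo_sub_rpow_eq_top (v : ℝ) {r h : ℝ} (hr : r ≤ -1) (hh : 0 < h) :
    ∫⁻ x in Ioo v (v + h), ENNReal.ofReal ((x - v) ^ r) = ∞ := by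
  have hshift := (measurePreserving_sub_right volume v).setLIntegral_comp_preimage
    (measurableSet_Ioo (a := 0) (b := h)) (f := fun x => ENNReal.ofReal (x ^ r)) (by fun_prop)
  rw [preimage_sub_const_Ioo, zero_add, add_comm h] at hshift
  rw [hshift, lintegral_Ioo_rpow_eq_top hr hh]

lemma lintegral_prod_eq_top_of_sections {α β : Type*} [MeasurableSpace α] [MeasurableSpace β]
    {μ : Measure α} {ν : Measure β} [SFinite μ] [SFinite ν] {g : α × β → ℝ≥0∞}
    (hg : Measurable g) {S : Set (α × β)} (hS : MeasurableSet S) {J : Set β} (hJ : ν J ≠ 0)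
    (hsection : ∀ y ∈ J, ∫⁻ x in {x | (x, y) ∈ S}, g (x, y) ∂μ = ∞) :
    ∫⁻ z in S, g z ∂(μ.prod ν) = ∞ := by
  rw [← lintegral_indicator hS, lintegral_prod_symm _ (hg.indicator hS).aemeasurable]
  refine lintegral_eq_top_of_measure_eq_top_ne_zero
    (hg.indicator hS).lintegral_prod_left'.aemeasurable (ne_bot_of_le_ne_bot hJ ?_)
  refine measure_mono fun y hy => ?_
  have hmeas : MeasurableSet {x | (x, y) ∈ S} := measurable_prodMk_right hS
  change ∫⁻ x, S.indicator g (x, y) ∂μ = ∞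
  rw [← hsection y hy, ← lintegral_indicator hmeas]
  rfl

lemma exists_Ioo_subset_section_of_isOpen {U : Set (ℝ × ℝ)} (hU : IsOpen U) {F : ℝ → ℝ} {t₀ : ℝ}
    (hF : ContinuousAt F t₀) (ht₀ : (F t₀, t₀) ∈ U) :
    ∃ ε > 0, ∀ T ∈ Metric.ball t₀ ε, Ioo (F T) (F T + ε) ⊆ {x | (x, T) ∈ U} := by
  have hshear : ContinuousAt (fun q : ℝ × ℝ => (F q.1 + q.2, q.1)) (t₀, 0) :=
    ((hF.comp continuousAt_fst).add continuousAt_snd).prodMk continuousAt_fst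
  have hnhds : (fun q : ℝ × ℝ => (F q.1 + q.2, q.1)) ⁻¹' U ∈ nhds (t₀, 0) :=
    hshear.preimage_mem_nhds (hU.mem_nhds (by simpa using ht₀))
  obtain ⟨ε, hε, hball⟩ := Metric.mem_nhds_iff.mp hnhds
  refine ⟨ε, hε, fun T hT x hx => ?_⟩
  have hmem : (T, x - F T) ∈ Metric.ball (t₀, (0 : ℝ)) ε := by
    rw [Metric.mem_ball, Prod.dist_eq, Real.dist_eq (x - F T), sub_zero,
      abs_of_pos (sub_pos.mpr hx.1)]
    exact max_lt hT (by linarith [hx.2])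
  simpa using hball hmem

noncomputable def curveSingularity (a b c σ : ℝ) (s : ℝ × ℝ) : ℝ :=
  |s.1 / s.2 ^ a - σ| ^ (-b) * s.2 ^ (-c)

lemma curveSingularity_rpow_eq {a b c σ p T x : ℝ} (hT : 0 < T) (hx : σ * T ^ a < x) :
    curveSingularity a b c σ (x, T) ^ p = T ^ ((a * b - c) * p) * (x - σ * T ^ a) ^ (-(b * p)) := by
  have hTa : 0 < T ^ a := rpow_pos_of_pos hT a
  have hu : 0 < x - σ * T ^ a := sub_pos.mpr hx
  have hsplit : x / T ^ a - σ = (x - σ * T ^ a) * T ^ (-a) := by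
    rw [rpow_neg hT.le]; field_simp
  have hT' : (T ^ (-a)) ^ (-b) * T ^ (-c) = T ^ (a * b - c) := by
    rw [← rpow_mul hT.le, ← rpow_add hT]; ring_nf
  rw [curveSingularity, hsplit, abs_of_pos (mul_pos hu (rpow_pos_of_pos hT _)),
    mul_rpow hu.le (rpow_nonneg hT.le _), mul_assoc, hT',
    mul_rpow (rpow_nonneg hu.le _) (rpow_nonneg hT.le _), ← rpow_mul hu.le, ← rpow_mul hT.le,
    mul_comm, neg_mul]

lemma lintegral_curveSingularity_rpow_eq_top {a b c σ p T h : ℝ} (hp : 0 < p) (hbp : 1 ≤ b * p)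
    (hT : 0 < T) (hh : 0 < h) :
    ∫⁻ x in Ioo (σ * T ^ a) (σ * T ^ a + h), ‖curveSingularity a b c σ (x, T)‖ₑ ^ p = ∞ := by
  have hpoint : ∀ x ∈ Ioo (σ * T ^ a) (σ * T ^ a + h),
      ‖curveSingularity a b c σ (x, T)‖ₑ ^ p =
        ENNReal.ofReal (T ^ ((a * b - c) * p)) * ENNReal.ofReal ((x - σ * T ^ a) ^ (-(b * p))) := by
    intro x hx
    have hnonneg : 0 ≤ curveSingularity a b c σ (x, T) :=
      mul_nonneg (rpow_nonneg (abs_nonneg _) _) (rpow_nonneg hT.le _)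
    rw [enorm_eq_ofReal hnonneg, ENNReal.ofReal_rpow_of_nonneg hnonneg hp.le,
      curveSingularity_rpow_eq hT hx.1, ENNReal.ofReal_mul (rpow_nonneg hT.le _)]
  rw [setLIntegral_congr_fun measurableSet_Ioo hpoint,
    lintegral_const_mul' _ _ ENNReal.ofReal_ne_top,
    lintegral_Ioo_sub_rpow_eq_top _ (by linarith) hh, ENNReal.mul_top]
  exact (ENNReal.ofReal_pos.mpr (rpow_pos_of_pos hT _)).ne'

theorem curveSingularity_not_memLp {a b c σ p t₀ : ℝ} (hp : 0 < p) (hbp : 1 ≤ b * p)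
    {U : Set (ℝ × ℝ)} (hU : IsOpen U) (ht₀ : 0 < t₀) (hcurve : (σ * t₀ ^ a, t₀) ∈ U) :
    ¬ MemLp (curveSingularity a b c σ) (ENNReal.ofReal p)
      (volume.restrict (U ∩ {s : ℝ × ℝ | 0 < s.2})) := by
  intro hmem
  have hU' : IsOpen (U ∩ {s : ℝ × ℝ | 0 < s.2}) :=
    hU.inter (isOpen_lt continuous_const continuous_snd)
  obtain ⟨ε, hε, hsection⟩ := exists_Ioo_subset_section_of_isOpen hU'
    (F := fun T => σ * T ^ a) (continuousAt_const.mul (continuousAt_rpow_const _ _ (.inl ht₀.ne')))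
    ⟨hcurve, ht₀⟩
  refine (lintegral_rpow_enorm_lt_top_of_eLpNorm_lt_top (by simpa using hp) ENNReal.ofReal_ne_top
    hmem.eLpNorm_lt_top).ne ?_
  rw [ENNReal.toReal_ofReal hp.le, Measure.volume_eq_prod]
  refine lintegral_prod_eq_top_of_sections (by unfold curveSingularity; fun_prop)
    hU'.measurableSet (Metric.measure_ball_pos volume t₀ hε).ne' fun T hT => ?_
  have hIoo := hsection T hT
  -- the section is nonempty, hence lies in the upper half-plane
  have hTpos : 0 < T := (hIoo ⟨lt_add_of_pos_right _ (half_pos hε), by linarith⟩).2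
  exact eq_top_iff.mpr <| (lintegral_curveSingularity_rpow_eq_top hp hbp hTpos hε).symm.le.trans
    (lintegral_mono_set hIoo)

theorem stmt14_general (m : ℕ) (γ : ℝ) (hγ : 3 / 4 < γ) (σ₀ : ℝ) :
    ∀ U : Set (ℝ × ℝ), IsOpen U →
      (∃ δ > (0 : ℝ), ∀ t : ℝ, 0 < t → t < δ →
        (σ₀ * t ^ ((2 * (m : ℝ)) / ((m : ℝ) + 1)), t) ∈ U) →
      ¬ MeasureTheory.MemLp
        (fun s : ℝ × ℝ =>
          |s.1 / s.2 ^ ((2 * (m : ℝ)) / ((m : ℝ) + 1)) - σ₀| ^ (-(4 * γ / 3 - 1)) *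
            s.2 ^ (-((2 * (m : ℝ) + 1) * γ / ((m : ℝ) + 1) - 1)))
        (ENNReal.ofReal (3 / (4 * γ - 3)))
        (MeasureTheory.volume.restrict (U ∩ {s : ℝ × ℝ | 0 < s.2})) := by
  rintro U hU ⟨δ, hδ, hcurve⟩
  have hγ' : 0 < 4 * γ - 3 := by linarith
  have hbp : (4 * γ / 3 - 1) * (3 / (4 * γ - 3)) = 1 := by field_simp
  exact curveSingularity_not_memLp (div_pos three_pos hγ') hbp.ge hU (half_pos hδ)
    (hcurve _ (half_pos hδ) (half_lt_self hδ))

/-- The lower-bound function for the Randol maximal function in the exceptional case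
fails to be `L^p` for `p = 3/(4γ-3)` on any open set containing the curve
`t ↦ (σ₀ t^{2m/(m+1)}, t)` for all small `t > 0`. -/
theorem stmt14 (m : ℕ) (hm : 2 ≤ m) (γ : ℝ) (hγ : 3 / 4 < γ) (hγ1 : γ ≤ 1) (σ₀ : ℝ) :
    ∀ U : Set (ℝ × ℝ), IsOpen U →
      (∃ δ > (0 : ℝ), ∀ t : ℝ, 0 < t → t < δ →
        (σ₀ * t ^ ((2 * (m : ℝ)) / ((m : ℝ) + 1)), t) ∈ U) →
      ¬ MeasureTheory.MemLp
        (fun s : ℝ × ℝ =>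
          |s.1 / s.2 ^ ((2 * (m : ℝ)) / ((m : ℝ) + 1)) - σ₀| ^ (-(4 * γ / 3 - 1)) *
            s.2 ^ (-((2 * (m : ℝ) + 1) * γ / ((m : ℝ) + 1) - 1)))
        (ENNReal.ofReal (3 / (4 * γ - 3)))
        (MeasureTheory.volume.restrict (U ∩ {s : ℝ × ℝ | 0 < s.2})) :=
  stmt14_general m γ hγ σ₀
end
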